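/- arXiv:1608.04794 — 7 statements merged into one kernel-verified Lean document; each statement's English description precedes it below -/
import Mathlib

section
/- Fix n ≥ 1. Let B : Matrix (Fin n × Bool) (Fin n × Bool) ℤ be skew-symmetric and anti-symmetric with respect to σ, and suppose that every vertex v satisfies Σ_u [B_{u,v}]₊ ≤ 2 and Σ_u [B_{v,u}]₊ ≤ 2 (at most 2 incoming and at most 2 outgoing arrows, counted with multiplicity). Then for every j : Fin n the exchange polynomial F_j is irreducible in MvPolynomial (Fin n) ℤ. -/
open MvPolynomial

/-- Fomin–Zelevinsky matrix mutation at `i`. -/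
def matMut {I : Type*} [DecidableEq I] (B : Matrix I I ℤ) (i : I) : Matrix I I ℤ :=
  fun j k =>
    if j = i ∨ k = i then -B j k
    else B j k + max (-B j i) 0 * B i k + B j i * max (B i k) 0

/-- The fixed-point-free involution `σ(k, ε) = (k, ¬ε)` on `Fin n × Bool`. -/
def sigmaInv {n : ℕ} (v : Fin n × Bool) : Fin n × Bool := (v.1, !v.2)

/-- `B` is anti-symmetric with respect to `σ`. -/
def IsAntiSymmetric {n : ℕ} (B : Matrix (Fin n × Bool) (Fin n × Bool) ℤ) : Prop :=
  (∀ u v, B u v = B (sigmaInv v) (sigmaInv u)) ∧ (∀ v, B v (sigmaInv v) = 0)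

/-- The folded `n × n` matrix of `B`. -/
def folded {n : ℕ} (B : Matrix (Fin n × Bool) (Fin n × Bool) ℤ) : Matrix (Fin n) (Fin n) ℤ :=
  fun k j => B (k, false) (j, false) + B (k, true) (j, false)

/-- The exchange polynomial of column `j` of the folded matrix of `B`. -/
noncomputable def exchangePoly {n : ℕ} (B : Matrix (Fin n × Bool) (Fin n × Bool) ℤ)
    (j : Fin n) : MvPolynomial (Fin n) ℤ :=
  (∏ k : Fin n, (X k : MvPolynomial (Fin n) ℤ) ^ (folded B k j).toNat) +
    ∏ k : Fin n, (X k : MvPolynomial (Fin n) ℤ) ^ (-(folded B k j)).toNat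

/-- The no-path condition at `i`: there is no path `u → (i, false) → σ(u)`. -/
def NoPath {n : ℕ} (B : Matrix (Fin n × Bool) (Fin n × Bool) ℤ) (i : Fin n) : Prop :=
  ∀ u, ¬(0 < B u (i, false) ∧ 0 < B (i, false) (sigmaInv u))

/-! ### Auxiliary lemmas -/

section Aux

/-- Transfer irreducibility along a ring equivalence. -/
lemma irred_of_equiv {A B : Type*} [CommRing A] [CommRing B] (e : A ≃+* B)
    {p : A} (h : Irreducible (e p)) : Irreducible p :=
  (MulEquiv.irreducible_iff e.toMulEquiv).mp h

/-- A linear polynomial whose two coefficients have only unit common divisors is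
irreducible. -/
lemma irred_linear {S : Type*} [CommRing S] [IsDomain S] (a c : S) (ha : a ≠ 0)
    (h : ∀ d : S, d ∣ a → d ∣ c → IsUnit d) :
    Irreducible (Polynomial.C a * Polynomial.X + Polynomial.C c) := by
  set p := Polynomial.C a * Polynomial.X + Polynomial.C c with hp
  have hdeg : p.natDegree = 1 := Polynomial.natDegree_linear ha
  have hpne : p ≠ 0 := fun h0 => by simp [h0] at hdeg
  have claim : ∀ f g : Polynomial S, p = f * g → g.natDegree = 0 → IsUnit g := by
    intro f g hfg hg0
    have hgC : g = Polynomial.C (g.coeff 0) := Polynomial.eq_C_of_natDegree_eq_zero hg0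
    set d := g.coeff 0 with hd
    have h1 : a = f.coeff 1 * d := by
      have := congrArg (fun q => Polynomial.coeff q 1) hfg
      simpa [hp, hgC, Polynomial.coeff_mul_C] using this
    have h2 : c = f.coeff 0 * d := by
      have := congrArg (fun q => Polynomial.coeff q 0) hfg
      simpa [hp, hgC, Polynomial.coeff_mul_C] using this
    rw [hgC]
    exact Polynomial.isUnit_C.mpr
      (h d ⟨f.coeff 1, by rw [h1]; ring⟩ ⟨f.coeff 0, by rw [h2]; ring⟩)
  constructor
  · intro hu
    have := Polynomial.natDegree_eq_zero_of_isUnit hu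
    omega
  · intro f g hfg
    have hf : f ≠ 0 := by rintro rfl; exact hpne (by rw [hfg, zero_mul])
    have hg : g ≠ 0 := by rintro rfl; exact hpne (by rw [hfg, mul_zero])
    have hsum : f.natDegree + g.natDegree = 1 := by
      rw [← Polynomial.natDegree_mul hf hg, ← hfg, hdeg]
    rcases Nat.eq_zero_or_pos f.natDegree with h0 | h0
    · exact Or.inl (claim g f (by rw [hfg]; ring) h0)
    · exact Or.inr (claim f g hfg (by omega))

/-- `X² + c` is irreducible when `s² + c ≠ 0` has no solution. -/
lemma irred_sq {S : Type*} [CommRing S] [IsDomain S] (c : S)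
    (h : ∀ s : S, s * s + c ≠ 0) :
    Irreducible (Polynomial.X ^ 2 + Polynomial.C c : Polynomial S) := by
  set p := (Polynomial.X ^ 2 + Polynomial.C c : Polynomial S) with hp
  have hmon : p.Monic := Polynomial.monic_X_pow_add_C c (by norm_num)
  have hdeg : p.natDegree = 2 := Polynomial.natDegree_X_pow_add_C
  have hpne : p ≠ 0 := hmon.ne_zero
  have claim : ∀ f g : Polynomial S, p = f * g → g.natDegree = 0 → IsUnit g := by
    intro f g hfg hg0
    have hgC : g = Polynomial.C (g.coeff 0) := Polynomial.eq_C_of_natDegree_eq_zero hg0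
    have hlc : f.leadingCoeff * g.coeff 0 = 1 := by
      have := hmon
      rw [Polynomial.Monic, hfg, Polynomial.leadingCoeff_mul, hgC,
        Polynomial.leadingCoeff_C] at this
      exact this
    rw [hgC]
    exact Polynomial.isUnit_C.mpr (IsUnit.of_mul_eq_one _ (by rw [mul_comm]; exact hlc))
  constructor
  · intro hu
    have := Polynomial.natDegree_eq_zero_of_isUnit hu
    omega
  · intro f g hfg
    have hf : f ≠ 0 := by rintro rfl; exact hpne (by rw [hfg, zero_mul])
    have hg : g ≠ 0 := by rintro rfl; exact hpne (by rw [hfg, mul_zero])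
    have hsum : f.natDegree + g.natDegree = 2 := by
      rw [← Polynomial.natDegree_mul hf hg, ← hfg, hdeg]
    rcases Nat.eq_zero_or_pos f.natDegree with h0 | h0
    · exact Or.inl (claim g f (by rw [hfg]; ring) h0)
    rcases Nat.eq_zero_or_pos g.natDegree with h1 | h1
    · exact Or.inr (claim f g hfg h1)
    exfalso
    have hfd : f.natDegree ≤ 1 := by omega
    have hgd : g.natDegree ≤ 1 := by omega
    set a := f.coeff 1 with hA
    set b := f.coeff 0 with hB
    set a' := g.coeff 1 with hA'
    set b' := g.coeff 0 with hB'
    have hfX : f = Polynomial.C a * Polynomial.X + Polynomial.C b :=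
      Polynomial.eq_X_add_C_of_natDegree_le_one hfd
    have hgX : g = Polynomial.C a' * Polynomial.X + Polynomial.C b' :=
      Polynomial.eq_X_add_C_of_natDegree_le_one hgd
    rw [hfX, hgX] at hfg
    have hexp : (Polynomial.C a * Polynomial.X + Polynomial.C b) *
        (Polynomial.C a' * Polynomial.X + Polynomial.C b') =
        Polynomial.C (a * a') * Polynomial.X ^ 2 +
          Polynomial.C (a * b' + a' * b) * Polynomial.X + Polynomial.C (b * b') := by
      simp only [Polynomial.C_mul, Polynomial.C_add]; ring
    rw [hexp] at hfg
    have e2 : (1 : S) = a * a' := by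
      have := congrArg (fun q => Polynomial.coeff q 2) hfg
      simpa [hp, mul_assoc, Polynomial.coeff_add, Polynomial.coeff_C_mul,
        Polynomial.coeff_X_pow, Polynomial.coeff_C] using this
    have e1 : (0 : S) = a * b' + a' * b := by
      have := congrArg (fun q => Polynomial.coeff q 1) hfg
      simpa [hp, mul_assoc, Polynomial.coeff_add, Polynomial.coeff_C_mul,
        Polynomial.coeff_X_pow, Polynomial.coeff_C] using this
    have e0 : c = b * b' := by
      have := congrArg (fun q => Polynomial.coeff q 0) hfg
      simpa [hp, mul_assoc, Polynomial.coeff_add, Polynomial.coeff_C_mul,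
        Polynomial.coeff_X_pow, Polynomial.coeff_C] using this
    exact h (a' * b) (by linear_combination (a' * b) * e1.symm - (b * b') * e2.symm + e0)

variable {m : ℕ}

/-- The equivalence separating the variable `v`. -/
noncomputable def psiE (m : ℕ) (v : Fin (m + 1)) :
    MvPolynomial (Fin (m + 1)) ℤ ≃+* Polynomial (MvPolynomial (Fin m) ℤ) :=
  ((renameEquiv ℤ (Equiv.swap v 0)).trans (finSuccEquiv ℤ m)).toRingEquiv

lemma psiE_X_self (v : Fin (m + 1)) : psiE m v (X v) = Polynomial.X := by
  simp [psiE, finSuccEquiv_X_zero]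

lemma swap_ne_zero {v u : Fin (m + 1)} (h : u ≠ v) : Equiv.swap v 0 u ≠ 0 := by
  intro h0
  exact h ((Equiv.swap v 0).injective (h0.trans (Equiv.swap_apply_left v 0).symm))

/-- The index of `X u` after the variable swap. -/
def vidx {v u : Fin (m + 1)} (h : u ≠ v) : Fin m :=
  (Equiv.swap v 0 u).pred (swap_ne_zero h)

lemma psiE_X_ne {v u : Fin (m + 1)} (h : u ≠ v) :
    psiE m v (X u) = Polynomial.C (X (vidx h)) := by
  have hs : Equiv.swap v 0 u = Fin.succ (vidx h) := (Fin.succ_pred _ _).symm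
  simp [psiE, hs, finSuccEquiv_X_succ]

lemma vidx_inj {v u1 u2 : Fin (m + 1)} (h1 : u1 ≠ v) (h2 : u2 ≠ v)
    (he : vidx h1 = vidx h2) : u1 = u2 := by
  apply (Equiv.swap v 0).injective
  have := congrArg Fin.succ he
  rwa [vidx, vidx, Fin.succ_pred, Fin.succ_pred] at this

lemma prime_X_mv {M : ℕ} (w : Fin M) : Prime (X w : MvPolynomial (Fin M) ℤ) := by
  have hM := w.2
  obtain ⟨k, rfl⟩ : ∃ k, M = k + 1 := ⟨M - 1, by omega⟩
  have : Prime (psiE k w (X w)) := by rw [psiE_X_self]; exact Polynomial.prime_X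
  exact (MulEquiv.prime_iff (psiE k w)).mp this

/-- If `M` evaluates to `1` at the point which is `0` at `w` and `1` elsewhere, then
the only common divisors of `X w` and `M` are units. -/
lemma cop_of_eval {M : ℕ} (w : Fin M) (q : MvPolynomial (Fin M) ℤ)
    (hq : eval (fun k => if k = w then 0 else (1 : ℤ)) q = 1) :
    ∀ d, d ∣ (X w : MvPolynomial (Fin M) ℤ) → d ∣ q → IsUnit d := by
  intro d hdX hdq
  obtain ⟨e, he⟩ := hdX
  rcases (prime_X_mv w).irreducible.isUnit_or_isUnit he with h | h
  · exact h
  exfalso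
  obtain ⟨u, rfl⟩ := h
  have hXd : (X w : MvPolynomial (Fin M) ℤ) ∣ d :=
    ⟨(↑u⁻¹ : MvPolynomial (Fin M) ℤ), by
      rw [he, mul_assoc, Units.mul_inv, mul_one]⟩
  obtain ⟨c, hc⟩ := hXd.trans hdq
  have := congrArg (eval (fun k => if k = w then 0 else (1 : ℤ))) hc
  rw [hq] at this
  simp at this

/-- `X + C c` is irreducible. -/
lemma irred_monic_lin {S : Type*} [CommRing S] [IsDomain S] (c : S) :
    Irreducible (Polynomial.X + Polynomial.C c) := by
  simpa using irred_linear 1 c one_ne_zero (fun d hd _ => isUnit_of_dvd_one hd)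

/-- `X v + M` is irreducible when `M` does not involve the variable `v`. -/
lemma irr_X_add (v : Fin (m + 1)) (M : MvPolynomial (Fin (m + 1)) ℤ)
    (h : ∃ c, psiE m v M = Polynomial.C c) : Irreducible (X v + M) := by
  obtain ⟨c, hc⟩ := h
  apply irred_of_equiv (psiE m v)
  rw [map_add, psiE_X_self, hc]
  exact irred_monic_lin c

/-- `X v * X w + M` is irreducible when `v ≠ w` and `M`, not involving `v, w`,
evaluates to `1` appropriately. -/
lemma irr_mul_add (v w : Fin (m + 1)) (hw : w ≠ v) (c : MvPolynomial (Fin m) ℤ)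
    (hc : eval (fun k => if k = vidx hw then 0 else (1 : ℤ)) c = 1)
    (M : MvPolynomial (Fin (m + 1)) ℤ) (hM : psiE m v M = Polynomial.C c) :
    Irreducible (X v * X w + M) := by
  apply irred_of_equiv (psiE m v)
  rw [map_add, map_mul, psiE_X_self, psiE_X_ne hw, hM, mul_comm Polynomial.X]
  exact irred_linear _ c (X_ne_zero _) (cop_of_eval _ c hc)

/-- `X v * X v + M` is irreducible in the square case. -/
lemma irr_sq_add (v : Fin (m + 1)) (c : MvPolynomial (Fin m) ℤ)
    (hc : eval (fun _ => (1 : ℤ)) c = 1)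
    (M : MvPolynomial (Fin (m + 1)) ℤ) (hM : psiE m v M = Polynomial.C c) :
    Irreducible (X v * X v + M) := by
  apply irred_of_equiv (psiE m v)
  rw [map_add, map_mul, psiE_X_self, hM, ← pow_two]
  refine irred_sq c (fun s hs => ?_)
  have := congrArg (eval (fun _ => (1 : ℤ))) hs
  simp only [map_add, map_mul, hc, map_zero] at this
  nlinarith [mul_self_nonneg (eval (fun _ => (1 : ℤ)) s)]

/-- Classification of products of variables with exponent sum at most 2. -/
lemma shape {N : ℕ} (a : Fin N → ℕ) (h : ∑ k, a k ≤ 2) :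
    (∏ k, (X k : MvPolynomial (Fin N) ℤ) ^ a k) = 1 ∨
    (∃ v, a v ≠ 0 ∧ (∏ k, (X k : MvPolynomial (Fin N) ℤ) ^ a k) = X v) ∨
    (∃ v w, a v ≠ 0 ∧ a w ≠ 0 ∧
      (∏ k, (X k : MvPolynomial (Fin N) ℤ) ^ a k) = X v * X w) := by
  by_cases hz : ∀ k, a k = 0
  · exact Or.inl (Finset.prod_eq_one (fun k _ => by rw [hz k, pow_zero]))
  push_neg at hz
  obtain ⟨v, hv⟩ := hz
  have hsplit : a v + ∑ k ∈ Finset.univ.erase v, a k = ∑ k, a k :=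
    Finset.add_sum_erase _ _ (Finset.mem_univ v)
  have hprod : (∏ k, (X k : MvPolynomial (Fin N) ℤ) ^ a k) =
      X v ^ a v * ∏ k ∈ Finset.univ.erase v, (X k : MvPolynomial (Fin N) ℤ) ^ a k :=
    (Finset.mul_prod_erase _ _ (Finset.mem_univ v)).symm
  by_cases hz2 : ∀ k ∈ Finset.univ.erase v, a k = 0
  · have hrest : (∏ k ∈ Finset.univ.erase v, (X k : MvPolynomial (Fin N) ℤ) ^ a k) = 1 :=
      Finset.prod_eq_one (fun k hk => by rw [hz2 k hk, pow_zero])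
    have hsum0 : ∑ k ∈ Finset.univ.erase v, a k = 0 :=
      Finset.sum_eq_zero hz2
    have hva : a v = 1 ∨ a v = 2 := by omega
    rcases hva with h1 | h2
    · exact Or.inr (Or.inl ⟨v, hv, by rw [hprod, hrest, h1, pow_one, mul_one]⟩)
    · refine Or.inr (Or.inr ⟨v, v, hv, hv, ?_⟩)
      rw [hprod, hrest, h2, mul_one, pow_two]
  push_neg at hz2
  obtain ⟨w, hwmem, hw⟩ := hz2
  have hsplit2 : a w + ∑ k ∈ (Finset.univ.erase v).erase w, a k =
      ∑ k ∈ Finset.univ.erase v, a k := Finset.add_sum_erase _ _ hwmem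
  have hrest0 : ∑ k ∈ (Finset.univ.erase v).erase w, a k = 0 := by omega
  have hav : a v = 1 := by omega
  have haw : a w = 1 := by omega
  refine Or.inr (Or.inr ⟨v, w, hv, hw, ?_⟩)
  have hprod2 : (∏ k ∈ Finset.univ.erase v, (X k : MvPolynomial (Fin N) ℤ) ^ a k) =
      X w ^ a w * ∏ k ∈ (Finset.univ.erase v).erase w,
        (X k : MvPolynomial (Fin N) ℤ) ^ a k :=
    (Finset.mul_prod_erase _ _ hwmem).symm
  have hrest1 : (∏ k ∈ (Finset.univ.erase v).erase w,
      (X k : MvPolynomial (Fin N) ℤ) ^ a k) = 1 :=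
    Finset.prod_eq_one (fun k hk => by
      rw [(Finset.sum_eq_zero_iff).mp hrest0 k hk, pow_zero])
  rw [hprod, hprod2, hrest1, hav, haw, pow_one, pow_one, mul_one]

/-- Summation bound for folded columns. -/
lemma sum_toNat_le {N : ℕ} (f : Fin N → ℤ) (g : Fin N × Bool → ℤ)
    (hfg : ∀ k, f k = g (k, false) + g (k, true))
    (hg : ∑ u, max (g u) 0 ≤ 2) : ∑ k, (f k).toNat ≤ 2 := by
  have key : ((∑ k, (f k).toNat : ℕ) : ℤ) ≤ 2 := by
    push_cast
    calc ∑ k, ((f k).toNat : ℤ)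
        ≤ ∑ k, (max (g (k, false)) 0 + max (g (k, true)) 0) := by
          refine Finset.sum_le_sum (fun k _ => ?_)
          rw [hfg k, Int.toNat_eq_max]
          exact max_le (add_le_add (le_max_left _ _) (le_max_left _ _))
            (add_nonneg (le_max_right _ _) (le_max_right _ _))
      _ = ∑ u : Fin N × Bool, max (g u) 0 := by
          rw [Fintype.sum_prod_type]
          exact Finset.sum_congr rfl (fun k _ => by rw [Fintype.sum_bool]; ring)
      _ ≤ 2 := hg
  exact_mod_cast key

end Aux

theorem exchangePoly_irreducible_of_degree_bound
    (n : ℕ) (hn : 1 ≤ n) (B : Matrix (Fin n × Bool) (Fin n × Bool) ℤ)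
    (hskew : B.transpose = -B) (hanti : IsAntiSymmetric B)
    (hin : ∀ v, (∑ u, max (B u v) 0) ≤ 2)
    (hout : ∀ v, (∑ u, max (B v u) 0) ≤ 2)
    (j : Fin n) :
    Irreducible (exchangePoly B j) := by
  obtain ⟨m, rfl⟩ : ∃ m, n = m + 1 := ⟨n - 1, by omega⟩
  have hsk : ∀ p q, B p q = -B q p := by
    intro p q
    have := congrFun (congrFun hskew q) p
    simpa [Matrix.transpose] using this
  have hA : ∑ k, (folded B k j).toNat ≤ 2 :=
    sum_toNat_le (fun k => folded B k j) (fun u => B u (j, false))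
      (fun k => rfl) (hin (j, false))
  have hB : ∑ k, (-(folded B k j)).toNat ≤ 2 :=
    sum_toNat_le (fun k => -(folded B k j)) (fun u => B (j, false) u)
      (fun k => by
        show -(B (k, false) (j, false) + B (k, true) (j, false)) =
          B (j, false) (k, false) + B (j, false) (k, true)
        rw [hsk (j, false) (k, false), hsk (j, false) (k, true)]; ring)
      (hout (j, false))
  have hdisj : ∀ k, (folded B k j).toNat = 0 ∨ (-(folded B k j)).toNat = 0 :=
    fun k => by omega
  have key : ∀ k, (folded B k j).toNat ≠ 0 → (-(folded B k j)).toNat ≠ 0 → False :=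
    fun k h1 h2 => by rcases hdisj k with h | h; exacts [h1 h, h2 h]
  have hone : ∀ c : MvPolynomial (Fin m) ℤ,
      eval (fun _ => (1 : ℤ)) c = 1 → True := fun _ _ => trivial
  rw [exchangePoly]
  rcases shape (fun k => (folded B k j).toNat) hA with pa | ⟨v, hav, pa⟩ | ⟨v, w, hav, haw, pa⟩ <;>
    rcases shape (fun k => (-(folded B k j)).toNat) hB with pb | ⟨u, hbu, pb⟩ |
      ⟨u, t, hbu, hbt, pb⟩ <;>
    rw [pa, pb]
  -- case (1,1): constant 2
  · rw [show ((1 : MvPolynomial (Fin (m + 1)) ℤ) + 1) = C 2 by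
      rw [← C_1, ← C_add]; norm_num]
    exact ((prime_C_iff (Fin (m + 1))).mpr Int.prime_two).irreducible
  -- case (1, X u)
  · rw [add_comm (1 : MvPolynomial (Fin (m + 1)) ℤ) (X u)]
    exact irr_X_add u 1 ⟨1, by rw [map_one, Polynomial.C_1]⟩
  -- case (1, X u * X t)
  · rw [add_comm (1 : MvPolynomial (Fin (m + 1)) ℤ) (X u * X t)]
    by_cases hut : u = t
    · subst hut
      exact irr_sq_add u 1 (by simp) 1 (by rw [map_one, Polynomial.C_1])
    · exact irr_mul_add u t (fun h => hut h.symm) 1 (by simp) 1 (by rw [map_one, Polynomial.C_1])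
  -- case (X v, 1)
  · exact irr_X_add v 1 ⟨1, by rw [map_one, Polynomial.C_1]⟩
  -- case (X v, X u)
  · have huv : u ≠ v := fun h => key v hav (h ▸ hbu)
    exact irr_X_add v (X u) ⟨X (vidx huv), psiE_X_ne huv⟩
  -- case (X v, X u * X t)
  · have huv : u ≠ v := fun h => key v hav (h ▸ hbu)
    have htv : t ≠ v := fun h => key v hav (h ▸ hbt)
    exact irr_X_add v (X u * X t)
      ⟨X (vidx huv) * X (vidx htv), by
        rw [map_mul, psiE_X_ne huv, psiE_X_ne htv, ← Polynomial.C_mul]⟩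
  -- case (X v * X w, 1)
  · by_cases hvw : v = w
    · subst hvw
      exact irr_sq_add v 1 (by simp) 1 (by rw [map_one, Polynomial.C_1])
    · exact irr_mul_add v w (fun h => hvw h.symm) 1 (by simp) 1 (by rw [map_one, Polynomial.C_1])
  -- case (X v * X w, X u)
  · rw [add_comm (X v * X w) (X u)]
    have hvu : v ≠ u := fun h => key u (h ▸ hav) hbu
    have hwu : w ≠ u := fun h => key u (h ▸ haw) hbu
    exact irr_X_add u (X v * X w)
      ⟨X (vidx hvu) * X (vidx hwu), by
        rw [map_mul, psiE_X_ne hvu, psiE_X_ne hwu, ← Polynomial.C_mul]⟩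
  -- case (X v * X w, X u * X t)
  · have hvu : v ≠ u := fun h => key u (h ▸ hav) hbu
    have hvt : v ≠ t := fun h => key t (h ▸ hav) hbt
    have hwu : w ≠ u := fun h => key u (h ▸ haw) hbu
    have hwt : w ≠ t := fun h => key t (h ▸ haw) hbt
    by_cases hvw : v = w
    · subst hvw
      by_cases hut : u = t
      · subst hut
        refine irr_sq_add v (X (vidx hvu.symm) * X (vidx hvu.symm)) (by simp)
          (X u * X u) ?_
        rw [map_mul, psiE_X_ne hvu.symm, ← Polynomial.C_mul]
      · rw [add_comm (X v * X v) (X u * X t)]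
        have htu : t ≠ u := fun h => hut h.symm
        refine irr_mul_add u t htu (X (vidx hvu) * X (vidx hvu)) ?_
          (X v * X v) ?_
        · have hne : vidx hvu ≠ vidx htu := fun h => hvt (vidx_inj hvu htu h)
          simp [hne]
        · rw [map_mul, psiE_X_ne hvu, ← Polynomial.C_mul]
    · have hwv : w ≠ v := fun h => hvw h.symm
      refine irr_mul_add v w hwv (X (vidx hvu.symm) * X (vidx hvt.symm)) ?_
        (X u * X t) ?_
      · have hne1 : vidx hvu.symm ≠ vidx hwv := fun h => hwu (vidx_inj _ _ h).symm
        have hne2 : vidx hvt.symm ≠ vidx hwv := fun h => hwt (vidx_inj _ _ h).symm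
        simp [hne1, hne2]
      · rw [map_mul, psiE_X_ne hvu.symm, psiE_X_ne hvt.symm, ← Polynomial.C_mul]
end

section
/- Fix n ≥ 1. Let B : Matrix (Fin n × Bool) (Fin n × Bool) ℤ be skew-symmetric and anti-symmetric with respect to σ, and let i, j : Fin n with i ≠ j. If the exchange polynomials satisfy F_i = F_j, then B_{(i,ε),(j,δ)} = 0 for all ε, δ ∈ Bool; that is, there are no arrows between the vertices lying over i and the vertices lying over j. -/
open MvPolynomial

lemma eval_exchangePoly {n : ℕ} (B : Matrix (Fin n × Bool) (Fin n × Bool) ℤ) (m j : Fin n) :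
    MvPolynomial.eval (fun k => if k = m then (2:ℤ) else 1) (exchangePoly B j)
      = 2 ^ (folded B m j).toNat + 2 ^ (-(folded B m j)).toNat := by
  have key : ∀ e : Fin n → ℕ,
      MvPolynomial.eval (fun k => if k = m then (2:ℤ) else 1)
        (∏ k : Fin n, (X k : MvPolynomial (Fin n) ℤ) ^ (e k)) = 2 ^ (e m) := by
    intro e
    rw [map_prod]
    rw [Finset.prod_eq_single m]
    · simp
    · intro k _ hk; simp [hk]
    · simp
  simp only [exchangePoly, map_add, key]

lemma two_pow_eq_two {p q : ℕ} (h : (2:ℤ) ^ p + 2 ^ q = 2) : p = 0 ∧ q = 0 := by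
  have h1 : (1:ℤ) ≤ 2 ^ p := one_le_pow₀ (by norm_num)
  have h2 : (1:ℤ) ≤ 2 ^ q := one_le_pow₀ (by norm_num)
  constructor
  · by_contra hp
    have : (2:ℤ) ^ 1 ≤ 2 ^ p := pow_le_pow_right₀ (by norm_num) (by omega)
    simp at this; linarith
  · by_contra hq
    have : (2:ℤ) ^ 1 ≤ 2 ^ q := pow_le_pow_right₀ (by norm_num) (by omega)
    simp at this; linarith

lemma folded_eq_zero {n : ℕ} (B : Matrix (Fin n × Bool) (Fin n × Bool) ℤ)
    (hskew : B.transpose = -B) (hanti : IsAntiSymmetric B)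
    (m j : Fin n) (hF : exchangePoly B m = exchangePoly B j) :
    folded B m j = 0 := by
  have hskew' : ∀ u v, B u v = - B v u := by
    intro u v
    have := congrFun (congrFun hskew v) u
    simpa [Matrix.transpose_apply] using this
  have hmm : folded B m m = 0 := by
    have h1 : B (m, false) (m, false) = 0 := by
      have := hskew' (m, false) (m, false); omega
    simp [folded, h1]
    have := hanti.2 (m, true)
    simpa [sigmaInv] using this
  have e1 := eval_exchangePoly B m m
  have e2 := eval_exchangePoly B m j
  rw [hF] at e1
  rw [e2, hmm] at e1
  simp at e1
  have := two_pow_eq_two e1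
  omega

theorem no_arrows_of_exchangePoly_eq
    (n : ℕ) (hn : 1 ≤ n) (B : Matrix (Fin n × Bool) (Fin n × Bool) ℤ)
    (hskew : B.transpose = -B) (hanti : IsAntiSymmetric B)
    (i j : Fin n) (hij : i ≠ j)
    (hF : exchangePoly B i = exchangePoly B j) :
    ∀ ε δ : Bool, B (i, ε) (j, δ) = 0 := by
  have hskew' : ∀ u v, B u v = - B v u := by
    intro u v
    have := congrFun (congrFun hskew v) u
    simpa [Matrix.transpose_apply] using this
  have hij1 : folded B i j = 0 := folded_eq_zero B hskew hanti i j hF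
  have hji1 : folded B j i = 0 := folded_eq_zero B hskew hanti j i hF.symm
  set a := B (i, false) (j, false) with ha
  set b := B (i, true) (j, false) with hb
  have hC1 : a + b = 0 := hij1
  have hC2 : -a + b = 0 := by
    have h1 : B (j, false) (i, false) = -a := hskew' _ _
    have h2 : B (j, true) (i, false) = b := by
      have := hanti.1 (j, true) (i, false)
      simpa [sigmaInv] using this
    have : folded B j i = -a + b := by simp [folded, h1, h2]
    omega
  have ha0 : a = 0 := by omega
  have hb0 : b = 0 := by omega
  intro ε δ
  cases ε <;> cases δ
  · exact ha0
  · -- B (i,false) (j,true) = B (j,false) (i,true) = -b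
    have h1 : B (i, false) (j, true) = B (j, false) (i, true) := by
      have := hanti.1 (i, false) (j, true)
      simpa [sigmaInv] using this
    have h2 : B (j, false) (i, true) = -b := by
      have := hskew' (j, false) (i, true); omega
    omega
  · exact hb0
  · have h1 : B (i, true) (j, true) = B (j, false) (i, false) := by
      have := hanti.1 (i, true) (j, true)
      simpa [sigmaInv] using this
    have h2 : B (j, false) (i, false) = -a := hskew' _ _
    omega
end

section
/- Fix n ≥ 1. Let B : Matrix (Fin n × Bool) (Fin n × Bool) ℤ be skew-symmetric and anti-symmetric with respect to σ. Let i, j : Fin n with j ≠ i, and suppose C_{i,j} = 0, where C is the folded matrix of B. Let B' := μ_{(i,true)}(μ_{(i,false)}(B)) and let C' be the folded matrix of B'. Then C'_{k,j} = C_{k,j} for every k : Fin n. -/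
open MvPolynomial

lemma helper_max (a p : ℤ) :
    max (-a) 0 * p + a * max p 0 + max a 0 * (-p) + (-a) * max (-p) 0 = 0 := by
  have h1 : max (-a) 0 = max a 0 - a := by omega
  have h2 : max (-p) 0 = max p 0 - p := by omega
  rw [h1, h2]; ring

theorem folded_doubleMut_eq_of_col_zero
    (n : ℕ) (hn : 1 ≤ n) (B : Matrix (Fin n × Bool) (Fin n × Bool) ℤ)
    (hskew : B.transpose = -B) (hanti : IsAntiSymmetric B)
    (i j : Fin n) (hij : j ≠ i) (hCij : folded B i j = 0) :
    ∀ k : Fin n, folded (matMut (matMut B (i, false)) (i, true)) k j = folded B k j := by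
  intro k
  have hsk : ∀ u v, B u v = -B v u := fun u v => by
    have := congrFun (congrFun hskew v) u
    simpa [Matrix.transpose] using this
  have h01 : B (i, false) (i, true) = 0 := by simpa [sigmaInv] using hanti.2 (i, false)
  have h10 : B (i, true) (i, false) = 0 := by simpa [sigmaInv] using hanti.2 (i, true)
  have hq : B (i, true) (j, false) = -B (i, false) (j, false) := by
    have := hCij; simp [folded] at this; omega
  by_cases hk : k = i
  · subst hk
    simp only [folded, matMut, Prod.mk.injEq, hij, and_false, and_true, or_false,
      false_or, if_true, if_false, Bool.false_eq_true, Bool.true_eq_false, or_self,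
      not_false_eq_true, h01, h10, neg_zero, max_self, mul_zero, zero_mul, add_zero,
      if_neg, if_pos, eq_self_iff_true, true_and]
    simp [hij, h01, h10, hq]
  · have hb0 : B (k, false) (i, true) = -B (k, true) (i, false) := by
      have h1 := hanti.1 (k, false) (i, true)
      simp [sigmaInv] at h1
      rw [h1, hsk]
    have hb1 : B (k, true) (i, true) = -B (k, false) (i, false) := by
      have h1 := hanti.1 (k, true) (i, true)
      simp [sigmaInv] at h1
      rw [h1, hsk]
    have hke : ∀ b b' : Bool, ((k, b) : Fin n × Bool) ≠ (i, b') := by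
      intro b b' h; exact hk (congrArg Prod.fst h)
    have hje : ∀ b : Bool, ((j, false) : Fin n × Bool) ≠ (i, b) := by
      intro b h; exact hij (congrArg Prod.fst h)
    simp only [folded, matMut, hke, hje, or_self, if_false, Prod.mk.injEq, hij,
      and_false, false_or, or_false, if_neg, not_false_eq_true, and_true,
      Bool.false_eq_true, Bool.true_eq_false]
    simp [hke, hje, h01, h10, hb0, hb1, hq]
    linear_combination helper_max (B (k, false) (i, false)) (B (i, false) (j, false)) +
      helper_max (B (k, true) (i, false)) (B (i, false) (j, false))
end

section
/- Let I be a finite type, B : Matrix I I ℤ, and let i, i' ∈ I with i ≠ i' and B_{i,i'} = 0 and B_{i',i} = 0. Then for all k, j ∈ I with k ∉ {i, i'} and j ∉ {i, i'}, one has (μ_{i'}(μ_i(B)))_{k,j} = (μ_i(B))_{k,j} + (μ_{i'}(B))_{k,j} − B_{k,j}. -/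
theorem matMut_double_independence
    {I : Type*} [Fintype I] [DecidableEq I] (B : Matrix I I ℤ)
    (i i' : I) (hii' : i ≠ i') (h1 : B i i' = 0) (h2 : B i' i = 0) :
    ∀ k j : I, k ≠ i → k ≠ i' → j ≠ i → j ≠ i' →
      matMut (matMut B i) i' k j = matMut B i k j + matMut B i' k j - B k j := by
  intro k j hki hki' hji hji'
  simp only [matMut, hki, hki', hji, hji', hii'.symm, h1, h2, if_neg, or_self,
    if_false, or_false, false_or, max_self, mul_zero, zero_mul, add_zero, zero_add, neg_zero, zero_sub, sub_zero, neg_neg]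
  ring
end

section
/- Let I be a finite type, B : Matrix I I ℤ, and let i, i' ∈ I with i ≠ i', B_{i,i'} = 0 and B_{i',i} = 0. Then matrix mutations at i and i' commute: μ_{i'}(μ_i(B)) = μ_i(μ_{i'}(B)). -/
theorem matMut_comm
    {I : Type*} [Fintype I] [DecidableEq I] (B : Matrix I I ℤ)
    (i i' : I) (hii' : i ≠ i') (h1 : B i i' = 0) (h2 : B i' i = 0) :
    matMut (matMut B i) i' = matMut (matMut B i') i := by
  have hii'' : i' ≠ i := hii'.symm
  funext j k
  simp only [matMut]
  by_cases hji : j = i <;> by_cases hji' : j = i' <;>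
    by_cases hki : k = i <;> by_cases hki' : k = i' <;>
    subst_vars <;>
    simp_all <;> ring
end

section
/- Fix n ≥ 1. Let B : Matrix (Fin n × Bool) (Fin n × Bool) ℤ be skew-symmetric and anti-symmetric with respect to σ, satisfying the no-path condition at i : Fin n. Then B' := μ_{(i,true)}(μ_{(i,false)}(B)) is again skew-symmetric and anti-symmetric with respect to σ; in particular B'_{u,v} = B'_{σ(v),σ(u)} for all u, v and B'_{v,σ(v)} = 0 for all v. -/
open MvPolynomial

lemma sym2 (a b : ℤ) : max (-a) 0 * b + a * max b 0 = max (-b) 0 * a + b * max a 0 := by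
  rcases le_total a 0 with ha | ha <;> rcases le_total b 0 with hb | hb
  · rw [max_eq_left (by linarith : (0:ℤ) ≤ -a), max_eq_right hb,
      max_eq_left (by linarith : (0:ℤ) ≤ -b), max_eq_right ha]; ring
  · rw [max_eq_left (by linarith : (0:ℤ) ≤ -a), max_eq_left hb,
      max_eq_right (by linarith : -b ≤ (0:ℤ)), max_eq_right ha]; ring
  · rw [max_eq_right (by linarith : -a ≤ (0:ℤ)), max_eq_right hb,
      max_eq_left (by linarith : (0:ℤ) ≤ -b), max_eq_left ha]; ring
  · rw [max_eq_right (by linarith : -a ≤ (0:ℤ)), max_eq_left hb,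
      max_eq_right (by linarith : -b ≤ (0:ℤ)), max_eq_left ha]; ring

lemma keyZero (a c : ℤ) (h1 : ¬(0 < a ∧ 0 < c)) (h2 : ¬(0 < -c ∧ 0 < -a)) :
    max (-a) 0 * c + a * max c 0 + (max (-c) 0 * a + c * max a 0) = 0 := by
  rcases le_total a 0 with ha | ha <;> rcases le_total c 0 with hc | hc
  · have hac : a = 0 ∨ c = 0 := by omega
    rw [max_eq_left (by linarith : (0:ℤ) ≤ -a), max_eq_right hc,
      max_eq_left (by linarith : (0:ℤ) ≤ -c), max_eq_right ha]
    rcases hac with rfl | rfl <;> ring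
  · rw [max_eq_left (by linarith : (0:ℤ) ≤ -a), max_eq_left hc,
      max_eq_right (by linarith : -c ≤ (0:ℤ)), max_eq_right ha]; ring
  · rw [max_eq_right (by linarith : -a ≤ (0:ℤ)), max_eq_right hc,
      max_eq_left (by linarith : (0:ℤ) ≤ -c), max_eq_left ha]; ring
  · have hac : a = 0 ∨ c = 0 := by omega
    rw [max_eq_right (by linarith : -a ≤ (0:ℤ)), max_eq_left hc,
      max_eq_right (by linarith : -c ≤ (0:ℤ)), max_eq_left ha]
    rcases hac with rfl | rfl <;> ring

lemma matMut_pos {I : Type*} [DecidableEq I] (B : Matrix I I ℤ) (i j k : I)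
    (h : j = i ∨ k = i) : matMut B i j k = -B j k := by
  simp only [matMut, if_pos h]

lemma matMut_neg {I : Type*} [DecidableEq I] (B : Matrix I I ℤ) (i j k : I)
    (hj : j ≠ i) (hk : k ≠ i) :
    matMut B i j k = B j k + max (-B j i) 0 * B i k + B j i * max (B i k) 0 := by
  simp only [matMut, if_neg (not_or.mpr ⟨hj, hk⟩)]

lemma matMut_skew {I : Type*} [DecidableEq I] (B : Matrix I I ℤ)
    (h : B.transpose = -B) (i : I) :
    (matMut B i).transpose = -(matMut B i) := by
  have hb : ∀ u v, B u v = -B v u := fun u v => by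
    have := congrFun (congrFun h v) u; simpa using this
  ext j k
  simp only [Matrix.transpose_apply, Matrix.neg_apply, matMut]
  by_cases hc : j = i ∨ k = i
  · rw [if_pos hc, if_pos (Or.symm hc), hb k j]
  · rw [if_neg hc, if_neg (fun h' => hc (Or.symm h')), hb k j, hb k i, hb i j]
    simp only [neg_neg]
    ring

theorem doubleMut_preserves_skew_and_antisymmetric
    (n : ℕ) (hn : 1 ≤ n) (B : Matrix (Fin n × Bool) (Fin n × Bool) ℤ)
    (hskew : B.transpose = -B) (hanti : IsAntiSymmetric B)
    (i : Fin n) (hnp : NoPath B i) :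
    (matMut (matMut B (i, false)) (i, true)).transpose =
        -(matMut (matMut B (i, false)) (i, true)) ∧
      IsAntiSymmetric (matMut (matMut B (i, false)) (i, true)) := by
  have hb : ∀ u v, B u v = -B v u := fun u v => by
    have := congrFun (congrFun hskew v) u; simpa using this
  obtain ⟨ha1, ha2⟩ := hanti
  have hσσ : ∀ v : Fin n × Bool, sigmaInv (sigmaInv v) = v := fun v => by
    simp [sigmaInv]
  have hσp : sigmaInv ((i, false) : Fin n × Bool) = (i, true) := rfl
  have hσq : sigmaInv ((i, true) : Fin n × Bool) = (i, false) := rfl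
  have hBpq : B (i, false) (i, true) = 0 := ha2 (i, false)
  have hBqp : B (i, true) (i, false) = 0 := by
    rw [hb, hBpq, neg_zero]
  have hqp : ((i, true) : Fin n × Bool) ≠ (i, false) := by simp
  have hpq : ((i, false) : Fin n × Bool) ≠ (i, true) := by simp
  -- entries of the first mutation involving (i,true)
  have hB1pq : matMut B (i, false) (i, false) (i, true) = 0 := by
    rw [matMut_pos _ _ _ _ (Or.inl rfl), hBpq, neg_zero]
  have hB1qp : matMut B (i, false) (i, true) (i, false) = 0 := by
    rw [matMut_pos _ _ _ _ (Or.inr rfl), hBqp, neg_zero]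
  have hB1jq : ∀ j, j ≠ (i, false) → matMut B (i, false) j (i, true) = B j (i, true) := by
    intro j hj
    rw [matMut_neg _ _ _ _ hj hqp, hBpq]
    simp
  have hB1qk : ∀ k, k ≠ (i, false) → matMut B (i, false) (i, true) k = B (i, true) k := by
    intro k hk
    rw [matMut_neg _ _ _ _ hqp hk, hBqp]
    simp
  -- master formulas for the double mutation
  have masterNeg : ∀ j k : Fin n × Bool, j ≠ (i, false) → j ≠ (i, true) →
      k ≠ (i, false) → k ≠ (i, true) →
      matMut (matMut B (i, false)) (i, true) j k =
        B j k + max (-B j (i, false)) 0 * B (i, false) k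
          + B j (i, false) * max (B (i, false) k) 0
          + (max (-B j (i, true)) 0 * B (i, true) k
            + B j (i, true) * max (B (i, true) k) 0) := by
    intro j k hjp hjq hkp hkq
    rw [matMut_neg _ _ _ _ hjq hkq, matMut_neg B _ _ _ hjp hkp, hB1jq j hjp, hB1qk k hkp]
    ring
  have masterPos : ∀ j k : Fin n × Bool,
      j = (i, false) ∨ j = (i, true) ∨ k = (i, false) ∨ k = (i, true) →
      matMut (matMut B (i, false)) (i, true) j k = -B j k := by
    intro j k h
    by_cases hkq : k = (i, true)
    · subst hkq
      by_cases hjq : j = (i, true)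
      · subst hjq
        rw [matMut_pos _ _ _ _ (Or.inl rfl), hB1jq _ hqp]
      · rw [matMut_pos _ _ _ _ (Or.inr rfl)]
        by_cases hjp : j = (i, false)
        · subst hjp; rw [hB1pq, hBpq, neg_zero]
        · rw [hB1jq j hjp]
    · by_cases hjq : j = (i, true)
      · subst hjq
        rw [matMut_pos _ _ _ _ (Or.inl rfl)]
        by_cases hkp : k = (i, false)
        · subst hkp; rw [hB1qp, hBqp, neg_zero]
        · rw [hB1qk k hkp]
      · -- now j ≠ (i,true), k ≠ (i,true): so j = (i,false) ∨ k = (i,false)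
        have h' : j = (i, false) ∨ k = (i, false) := by tauto
        rw [matMut_neg _ _ _ _ hjq hkq]
        rcases h' with rfl | rfl
        · rw [hB1pq, matMut_pos B _ _ _ (Or.inl rfl)]
          by_cases hkp : k = (i, false)
          · subst hkp; rw [hB1qp]; simp
          · rw [hB1qk k hkp]; simp
        · rw [hB1qp, matMut_pos B _ _ _ (Or.inr rfl)]
          by_cases hjp : j = (i, false)
          · subst hjp; rw [hB1pq]; simp
          · rw [hB1jq j hjp]; simp
  -- consequences of anti-symmetry
  have e1 : ∀ w : Fin n × Bool, B (sigmaInv w) (i, false) = B (i, true) w := by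
    intro w; rw [ha1 (sigmaInv w) (i, false)]; simp [sigmaInv]
  have e2 : ∀ w : Fin n × Bool, B (i, false) (sigmaInv w) = B w (i, true) := by
    intro w; rw [ha1 (i, false) (sigmaInv w)]; simp [sigmaInv]
  have e3 : ∀ w : Fin n × Bool, B (sigmaInv w) (i, true) = B (i, false) w := by
    intro w; rw [ha1 (sigmaInv w) (i, true)]; simp [sigmaInv]
  have e4 : ∀ w : Fin n × Bool, B (i, true) (sigmaInv w) = B w (i, false) := by
    intro w; rw [ha1 (i, true) (sigmaInv w)]; simp [sigmaInv]
  refine ⟨matMut_skew _ (matMut_skew B hskew _) _, fun u v => ?_, fun v => ?_⟩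
  · by_cases hP : u = (i, false) ∨ u = (i, true) ∨ v = (i, false) ∨ v = (i, true)
    · have hP' : sigmaInv v = (i, false) ∨ sigmaInv v = (i, true) ∨
          sigmaInv u = (i, false) ∨ sigmaInv u = (i, true) := by
        rcases hP with rfl | rfl | rfl | rfl <;> simp [sigmaInv]
      rw [masterPos u v hP, masterPos _ _ hP', ← ha1 u v]
    · push_neg at hP
      obtain ⟨hup, huq, hvp, hvq⟩ := hP
      have hσvp : sigmaInv v ≠ (i, false) := fun hc => hvq (by rw [← hσσ v, hc, hσp])
      have hσvq : sigmaInv v ≠ (i, true) := fun hc => hvp (by rw [← hσσ v, hc, hσq])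
      have hσup : sigmaInv u ≠ (i, false) := fun hc => huq (by rw [← hσσ u, hc, hσp])
      have hσuq : sigmaInv u ≠ (i, true) := fun hc => hup (by rw [← hσσ u, hc, hσq])
      rw [masterNeg u v hup huq hvp hvq,
        masterNeg (sigmaInv v) (sigmaInv u) hσvp hσvq hσup hσuq,
        e1 v, e2 u, e3 v, e4 u, ← ha1 u v]
      linarith [sym2 (B u (i, false)) (B (i, false) v),
        sym2 (B u (i, true)) (B (i, true) v)]
  · by_cases hvp : v = (i, false)
    · subst hvp
      rw [masterPos _ _ (Or.inl rfl), hσp, hBpq, neg_zero]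
    · by_cases hvq : v = (i, true)
      · subst hvq
        rw [masterPos _ _ (Or.inr (Or.inl rfl)), hσq, hBqp, neg_zero]
      · have hσvp : sigmaInv v ≠ (i, false) := fun hc => hvq (by rw [← hσσ v, hc, hσp])
        have hσvq : sigmaInv v ≠ (i, true) := fun hc => hvp (by rw [← hσσ v, hc, hσq])
        rw [masterNeg v (sigmaInv v) hvp hvq hσvp hσvq, ha2 v, e2 v, e4 v]
        have h1 : ¬(0 < B v (i, false) ∧ 0 < B v (i, true)) := by
          have := hnp v
          rw [e2 v] at this
          exact this
        have h2 : ¬(0 < -B v (i, true) ∧ 0 < -B v (i, false)) := by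
          have := hnp (sigmaInv v)
          rw [hσσ v, e1 v, hb (i, true) v, hb (i, false) v] at this
          exact this
        linarith [keyZero (B v (i, false)) (B v (i, true)) h1 h2]
end

section
/- In the polynomial ring MvPolynomial (Fin 3) ℤ with variables X₀, X₁, X₂, the polynomial (X₀ + X₁)² + X₂² · X₀ · X₁ is irreducible. -/
open MvPolynomial

private abbrev R2 := MvPolynomial (Fin 2) ℤ

private lemma discrim_not_sq :
    ∀ s : R2, discrim 1 (X 0 * (2 + X 1 ^ 2)) (X 0 ^ 2) ≠ s ^ 2 := by
  intro s h
  have h1 := congrArg (eval (fun _ => (1 : ℤ))) h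
  simp [discrim] at h1
  set t := eval (fun _ => (1 : ℤ)) s with ht
  have hb1 : t ≤ 3 := by nlinarith
  have hb2 : -3 ≤ t := by nlinarith
  interval_cases t <;> omega

private lemma q_irred :
    Irreducible (Polynomial.X ^ 2 + Polynomial.C (X 0 * (2 + X 1 ^ 2)) * Polynomial.X
      + Polynomial.C ((X 0 : R2) ^ 2)) := by
  set b : R2 := X 0 * (2 + X 1 ^ 2)
  set c : R2 := X 0 ^ 2
  have hmonic : (Polynomial.X ^ 2 + (Polynomial.C b * Polynomial.X + Polynomial.C c)).Monic := by
    apply Polynomial.monic_X_pow_add (n := 2)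
    exact lt_of_le_of_lt (Polynomial.degree_linear_le) (by norm_num)
  have hq : Polynomial.X ^ 2 + Polynomial.C b * Polynomial.X + Polynomial.C c
      = Polynomial.X ^ 2 + (Polynomial.C b * Polynomial.X + Polynomial.C c) := by ring
  rw [hq]
  have hnd : (Polynomial.X ^ 2 + (Polynomial.C b * Polynomial.X + Polynomial.C c)).natDegree = 2 := by
    rw [← hq]
    have := Polynomial.natDegree_quadratic (a := (1 : R2)) (b := b) (c := c) one_ne_zero
    simpa using this
  rw [hmonic.irreducible_iff_roots_eq_zero_of_degree_le_three (by omega) (by omega)]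
  rw [Multiset.eq_zero_iff_forall_notMem]
  intro r hr
  rw [Polynomial.mem_roots hmonic.ne_zero] at hr
  have heval : (1 : R2) * (r * r) + b * r + c = 0 := by
    have := hr
    simp [Polynomial.IsRoot, Polynomial.eval_add, Polynomial.eval_mul] at this
    ring_nf
    ring_nf at this
    linear_combination this
  exact quadratic_ne_zero_of_discrim_ne_sq discrim_not_sq r heval

theorem onesided_exchangePoly_irreducible :
    Irreducible (((X 0 + X 1) ^ 2 + (X 2) ^ 2 * X 0 * X 1 :
      MvPolynomial (Fin 3) ℤ)) := by
  have key : finSuccEquiv ℤ 2 ((X 0 + X 1) ^ 2 + (X 2) ^ 2 * X 0 * X 1 :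
      MvPolynomial (Fin 3) ℤ)
      = Polynomial.X ^ 2 + Polynomial.C (X 0 * (2 + X 1 ^ 2)) * Polynomial.X
        + Polynomial.C ((X 0 : R2) ^ 2) := by
    have e1 : finSuccEquiv ℤ 2 (X (1 : Fin 3)) = Polynomial.C (X 0) := by
      rw [show (1 : Fin 3) = Fin.succ 0 from rfl, finSuccEquiv_X_succ]
    have e2 : finSuccEquiv ℤ 2 (X (2 : Fin 3)) = Polynomial.C (X 1) := by
      rw [show (2 : Fin 3) = Fin.succ 1 from rfl, finSuccEquiv_X_succ]
    have e3 : (Polynomial.C (2 : R2)) = 2 := map_ofNat _ 2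
    simp [map_add, map_mul, map_pow, finSuccEquiv_X_zero, e1, e2,
      Polynomial.C_mul, Polynomial.C_add, Polynomial.C_pow, e3]
    ring
  rw [← MulEquiv.irreducible_iff (finSuccEquiv ℤ 2), key]
  exact q_irred
end
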